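/- arXiv:1405.5605 — 4 statements merged into one kernel-verified Lean document; each statement's English description precedes it below -/
import Mathlib

section
/- For every natural number n, the limit σ(n) := lim_{N→∞} (1/N) Σ_{i=0}^{N-1} (-1)^{t[i]+t[i+n]} exists, where t is the Thue–Morse sequence. -/
/-!
Write `s i = (-1) ^ t i` and `S n N = ∑_{i<N} s i * s (i + n)`. Since `s (2i) = s i` and
`s (2i+1) = -s i`, pairing the terms `2j, 2j+1` gives `S (2m) (2N) = 2 S m N` and
`S (2m+1) (2N) = -(S m N + S (m+1) N)`; as `S n` changes by at most `1` per step, an expansion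
`S n N = σ n * N + o(N)` propagates by strong induction on `n`, with `σ (2m) = σ m` and
`σ (2m+1) = -(σ m + σ (m+1)) / 2`. The base `n = 1` is self-referential:
`S 1 (2N) = -(N + S 1 N)`, so `e N = S 1 N + N / 3` satisfies `|e N| ≤ |e (N / 2)| + 2 / 3`,
whence `e N = O(log N)` and `σ 1 = -1/3`.
-/

/-- The Thue–Morse sequence: parity of the number of 1s in binary representation. -/
def t (n : ℕ) : ℕ := (Nat.digits 2 n).count 1 % 2

open Filter Asymptotics Finset

lemma sum_range_two_mul {M : Type*} [AddCommMonoid M] (f : ℕ → M) (N : ℕ) :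
    ∑ i ∈ range (2 * N), f i = ∑ j ∈ range N, (f (2 * j) + f (2 * j + 1)) := by
  induction N with
  | zero => simp
  | succ N ih =>
    rw [show 2 * (N + 1) = 2 * N + 1 + 1 by ring, sum_range_succ, sum_range_succ,
      sum_range_succ, ih, add_assoc]

section Asymptotics

variable {E : Type*} [SeminormedAddCommGroup E]

lemma isLittleO_of_comp_two_mul {f : ℕ → E} {C : ℝ} (hf : ∀ N, ‖f (N + 1) - f N‖ ≤ C)
    (h : (fun K ↦ f (2 * K)) =o[atTop] (fun K ↦ (K : ℝ))) :
    f =o[atTop] (fun N ↦ (N : ℝ)) := by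
  have heven : (fun N ↦ f (2 * (N / 2))) =o[atTop] (fun N ↦ (N : ℝ)) := by
    refine (h.comp_tendsto (Nat.tendsto_div_const_atTop two_ne_zero)).trans_isBigO ?_
    refine IsBigO.of_bound 1 (Eventually.of_forall fun N ↦ ?_)
    simpa using Nat.div_le_self N 2
  have hodd : (fun N ↦ f N - f (2 * (N / 2))) =o[atTop] (fun N ↦ (N : ℝ)) := by
    refine IsBigO.trans_isLittleO (g := fun _ ↦ (1 : ℝ)) ?_
      ((isLittleO_const_id_atTop 1).comp_tendsto tendsto_natCast_atTop_atTop)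
    refine IsBigO.of_bound C (Eventually.of_forall fun N ↦ ?_)
    rcases Nat.even_or_odd' N with ⟨K, rfl | rfl⟩
    · simpa [Nat.mul_div_cancel_left] using (norm_nonneg _).trans (hf 0)
    · simpa [show (2 * K + 1) / 2 = K by omega] using hf (2 * K)
  simpa using heven.add hodd

lemma isLittleO_length_digits {b : ℕ} (hb : 1 < b) :
    (fun N ↦ ((Nat.digits b N).length : ℝ)) =o[atTop] (fun N ↦ (N : ℝ)) := by
  have hlen : Tendsto (fun N ↦ (Nat.digits b N).length) atTop atTop := by
    refine tendsto_atTop_atTop.2 fun k ↦ ⟨b ^ k, fun N hN ↦ ?_⟩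
    exact (Nat.pow_lt_pow_iff_right hb).1 (hN.trans_lt (Nat.lt_base_pow_length_digits hb)) |>.le
  refine ((isLittleO_coe_const_pow_of_one_lt (R := ℝ) (Nat.one_lt_cast.2 hb)).comp_tendsto
    hlen).trans_isBigO ?_
  refine IsBigO.of_bound b (eventually_ne_atTop 0 |>.mono fun N hN ↦ ?_)
  simp only [Function.comp_apply, norm_pow, Real.norm_natCast]
  exact_mod_cast Nat.base_pow_length_digits_le b N hb hN

lemma norm_le_of_norm_le_norm_div_add {f : ℕ → E} {b : ℕ} (hb : 1 < b) {c : ℝ}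
    (h : ∀ N, 0 < N → ‖f N‖ ≤ ‖f (N / b)‖ + c) (N : ℕ) :
    ‖f N‖ ≤ ‖f 0‖ + c * (Nat.digits b N).length := by
  induction N using Nat.strong_induction_on with
  | _ N ih =>
    rcases Nat.eq_zero_or_pos N with rfl | hN
    · simp
    · rw [Nat.digits_def' hb hN, List.length_cons, Nat.cast_succ, mul_add_one, ← add_assoc]
      linarith [h N hN, ih (N / b) (Nat.div_lt_self hN hb)]

lemma isLittleO_of_norm_le_norm_div_add {f : ℕ → E} {b : ℕ} (hb : 1 < b) {c : ℝ}
    (h : ∀ N, 0 < N → ‖f N‖ ≤ ‖f (N / b)‖ + c) :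
    f =o[atTop] (fun N ↦ (N : ℝ)) := by
  have hbound : (fun N ↦ ‖f 0‖ + c * (Nat.digits b N).length) =o[atTop] (fun N ↦ (N : ℝ)) :=
    ((isLittleO_const_id_atTop _).comp_tendsto tendsto_natCast_atTop_atTop).add
      ((isLittleO_length_digits hb).const_mul_left c)
  refine IsBigO.trans_isLittleO (IsBigO.of_bound 1 (Eventually.of_forall fun N ↦ ?_)) hbound
  rw [one_mul, Real.norm_eq_abs]
  exact (norm_le_of_norm_le_norm_div_add hb h N).trans (le_abs_self _)

end Asymptotics

lemma t_two_mul (i : ℕ) : t (2 * i) = t i := by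
  rcases Nat.eq_zero_or_pos i with rfl | hi
  · rfl
  · rw [t, Nat.digits_def' one_lt_two (by omega), t]
    simp

lemma t_two_mul_add_one (i : ℕ) : t (2 * i + 1) = (t i + 1) % 2 := by
  rw [t, Nat.digits_def' one_lt_two (by omega), t]
  simp [show (2 * i + 1) / 2 = i by omega]

noncomputable def tmSign (i : ℕ) : ℝ := (-1) ^ t i

lemma tmSign_two_mul (i : ℕ) : tmSign (2 * i) = tmSign i := by
  rw [tmSign, t_two_mul, tmSign]

lemma tmSign_two_mul_add_one (i : ℕ) : tmSign (2 * i + 1) = -tmSign i := by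
  rw [tmSign, t_two_mul_add_one, ← neg_one_pow_eq_pow_mod_two, pow_succ, mul_neg_one, tmSign]

lemma abs_tmSign (i : ℕ) : |tmSign i| = 1 := by
  simp [tmSign]

lemma tmSign_mul_self (i : ℕ) : tmSign i * tmSign i = 1 := by
  rw [← abs_mul_abs_self, abs_tmSign, one_mul]

noncomputable def autocorrSum (n N : ℕ) : ℝ := ∑ i ∈ range N, tmSign i * tmSign (i + n)

lemma autocorrSum_succ (n N : ℕ) :
    autocorrSum n (N + 1) = autocorrSum n N + tmSign N * tmSign (N + n) :=
  sum_range_succ _ _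

lemma autocorrSum_zero (N : ℕ) : autocorrSum 0 N = N := by
  simp [autocorrSum, tmSign_mul_self]

lemma autocorrSum_two_mul (m N : ℕ) : autocorrSum (2 * m) (2 * N) = 2 * autocorrSum m N := by
  rw [autocorrSum, sum_range_two_mul, autocorrSum, mul_sum]
  refine sum_congr rfl fun j _ ↦ ?_
  rw [← mul_add, show 2 * j + 1 + 2 * m = 2 * (j + m) + 1 by ring, tmSign_two_mul,
    tmSign_two_mul, tmSign_two_mul_add_one, tmSign_two_mul_add_one]
  ring

lemma autocorrSum_two_mul_add_one (m N : ℕ) :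
    autocorrSum (2 * m + 1) (2 * N) = -(autocorrSum m N + autocorrSum (m + 1) N) := by
  rw [autocorrSum, sum_range_two_mul, autocorrSum, autocorrSum, ← sum_add_distrib,
    ← sum_neg_distrib]
  refine sum_congr rfl fun j _ ↦ ?_
  rw [show 2 * j + (2 * m + 1) = 2 * (j + m) + 1 by ring,
    show 2 * j + 1 + (2 * m + 1) = 2 * (j + (m + 1)) by ring, tmSign_two_mul, tmSign_two_mul,
    tmSign_two_mul_add_one, tmSign_two_mul_add_one]
  ring

lemma norm_autocorrSum_sub_mul_succ_sub_le (n : ℕ) (L : ℝ) (N : ℕ) :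
    ‖(autocorrSum n (N + 1) - L * ↑(N + 1)) - (autocorrSum n N - L * N)‖ ≤ 1 + |L| := by
  rw [autocorrSum_succ, Real.norm_eq_abs, Nat.cast_succ,
    show ∀ a b : ℝ, a + b - L * (N + 1) - (a - L * N) = b - L by intros; ring]
  refine (abs_sub _ _).trans ?_
  rw [abs_mul, abs_tmSign, abs_tmSign, one_mul]

lemma isLittleO_autocorrSum_of_two_mul {n : ℕ} {L : ℝ}
    (h : (fun K ↦ autocorrSum n (2 * K) - L * ↑(2 * K)) =o[atTop] (fun K ↦ (K : ℝ))) :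
    (fun N ↦ autocorrSum n N - L * N) =o[atTop] (fun N ↦ (N : ℝ)) :=
  isLittleO_of_comp_two_mul (norm_autocorrSum_sub_mul_succ_sub_le n L) h

lemma isLittleO_autocorrSum_zero :
    (fun N ↦ autocorrSum 0 N - 1 * N) =o[atTop] (fun N ↦ (N : ℝ)) := by
  simp [autocorrSum_zero]

lemma isLittleO_autocorrSum_one :
    (fun N ↦ autocorrSum 1 N - (-1 / 3) * N) =o[atTop] (fun N ↦ (N : ℝ)) := by
  have h_even (K : ℕ) : autocorrSum 1 (2 * K) = -(K + autocorrSum 1 K) := by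
    simpa [autocorrSum_zero] using autocorrSum_two_mul_add_one 0 K
  refine isLittleO_of_norm_le_norm_div_add one_lt_two (c := 2 / 3) fun N _ ↦ ?_
  simp only [Real.norm_eq_abs]
  rcases Nat.even_or_odd' N with ⟨K, rfl | rfl⟩
  · rw [Nat.mul_div_cancel_left K two_pos, h_even]
    push_cast
    rw [show -(K + autocorrSum 1 K) - -1 / 3 * (2 * K) = -(autocorrSum 1 K - -1 / 3 * K) by ring,
      abs_neg]
    linarith
  · rw [show (2 * K + 1) / 2 = K by omega, autocorrSum_succ, h_even, tmSign_two_mul_add_one,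
      tmSign_two_mul, mul_neg, tmSign_mul_self]
    push_cast
    rw [show -(K + autocorrSum 1 K) + -1 - -1 / 3 * (2 * K + 1)
      = -(autocorrSum 1 K - -1 / 3 * K) + -(2 / 3) by ring]
    refine (abs_add_le _ _).trans ?_
    rw [abs_neg, abs_neg, abs_of_pos (by norm_num : (0 : ℝ) < 2 / 3)]

lemma isLittleO_autocorrSum_two_mul {m : ℕ} {L : ℝ}
    (h : (fun N ↦ autocorrSum m N - L * N) =o[atTop] (fun N ↦ (N : ℝ))) :
    (fun N ↦ autocorrSum (2 * m) N - L * N) =o[atTop] (fun N ↦ (N : ℝ)) := by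
  refine isLittleO_autocorrSum_of_two_mul ((h.const_mul_left 2).congr_left fun K ↦ ?_)
  rw [autocorrSum_two_mul]
  push_cast
  ring

lemma isLittleO_autocorrSum_two_mul_add_one {m : ℕ} {L₁ L₂ : ℝ}
    (h₁ : (fun N ↦ autocorrSum m N - L₁ * N) =o[atTop] (fun N ↦ (N : ℝ)))
    (h₂ : (fun N ↦ autocorrSum (m + 1) N - L₂ * N) =o[atTop] (fun N ↦ (N : ℝ))) :
    (fun N ↦ autocorrSum (2 * m + 1) N - -(L₁ + L₂) / 2 * N) =o[atTop] (fun N ↦ (N : ℝ)) := by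
  refine isLittleO_autocorrSum_of_two_mul ((h₁.add h₂).neg_left.congr_left fun K ↦ ?_)
  rw [autocorrSum_two_mul_add_one]
  push_cast
  ring

lemma exists_isLittleO_autocorrSum (n : ℕ) :
    ∃ L : ℝ, (fun N ↦ autocorrSum n N - L * N) =o[atTop] (fun N ↦ (N : ℝ)) := by
  induction n using Nat.strong_induction_on with
  | _ n ih =>
    rcases Nat.even_or_odd' n with ⟨m, rfl | rfl⟩
    · rcases Nat.eq_zero_or_pos m with rfl | hm
      · exact ⟨1, isLittleO_autocorrSum_zero⟩
      · obtain ⟨L, hL⟩ := ih m (by omega)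
        exact ⟨L, isLittleO_autocorrSum_two_mul hL⟩
    · rcases Nat.eq_zero_or_pos m with rfl | hm
      · exact ⟨-1 / 3, isLittleO_autocorrSum_one⟩
      · obtain ⟨L₁, hL₁⟩ := ih m (by omega)
        obtain ⟨L₂, hL₂⟩ := ih (m + 1) (by omega)
        exact ⟨_, isLittleO_autocorrSum_two_mul_add_one hL₁ hL₂⟩

theorem thue_morse_autocorrelation_exists (n : ℕ) :
    ∃ L : ℝ, Filter.Tendsto
      (fun N : ℕ => (1 / (N : ℝ)) * ∑ i ∈ Finset.range N, (-1 : ℝ) ^ (t i + t (i + n)))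
      Filter.atTop (nhds L) := by
  obtain ⟨L, hL⟩ := exists_isLittleO_autocorrSum n
  refine ⟨L, ?_⟩
  have h := hL.tendsto_div_nhds_zero.add_const L
  rw [zero_add] at h
  refine h.congr' (eventually_ne_atTop 0 |>.mono fun N hN ↦ ?_)
  rw [sub_div, mul_div_cancel_right₀ _ (Nat.cast_ne_zero.2 hN), sub_add_cancel]
  simp only [autocorrSum, tmSign, pow_add, one_div_mul_eq_div]
end

section
/- For every k ∈ ℕ with k ≠ 0, the Thue–Morse autocorrelation satisfies -1/3 ≤ σ(k) ≤ 1/3. -/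
/-! By strong induction: for `k ≠ 0` the recursion expresses `σ k` either as a copy of some `σ n`
or as the negated average of `σ n` and `σ (n + 1)`, with `0 < n < k` except when `k = 1`. Both
operations preserve a symmetric interval `[-c, c]`, so the bound `|σ 1| = 1/3` propagates to all
`k ≠ 0`. -/

lemma abs_neg_add_div_two_le {a b c : ℝ} (ha : |a| ≤ c) (hb : |b| ≤ c) : |-(a + b) / 2| ≤ c := by
  rw [abs_le] at *
  constructor <;> linarith

lemma abs_le_of_dyadic_recursion (σ : ℕ → ℝ) {c : ℝ} (h1 : |σ 1| ≤ c)
    (heven : ∀ n : ℕ, σ (2 * n) = σ n)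
    (hodd : ∀ n : ℕ, σ (2 * n + 1) = -(σ n + σ (n + 1)) / 2) :
    ∀ k : ℕ, k ≠ 0 → |σ k| ≤ c := by
  intro k
  induction k using Nat.strong_induction_on with
  | _ k ih =>
    intro hk
    obtain ⟨n, rfl | rfl⟩ := Nat.even_or_odd' k
    · rw [heven]
      exact ih n (by omega) (by omega)
    · rcases Nat.eq_zero_or_pos n with rfl | hn
      · exact h1
      · rw [hodd]
        exact abs_neg_add_div_two_le (ih n (by omega) (by omega)) (ih (n + 1) (by omega) (by omega))

theorem sigma_bounds_general (σ : ℕ → ℝ) (h1 : σ 1 = -1/3)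
    (heven : ∀ n : ℕ, σ (2 * n) = σ n)
    (hodd : ∀ n : ℕ, σ (2 * n + 1) = -(σ n + σ (n + 1)) / 2) :
    ∀ k : ℕ, k ≠ 0 → -1/3 ≤ σ k ∧ σ k ≤ 1/3 := by
  have h1_abs : |σ 1| ≤ 1/3 := by norm_num [h1, abs_of_neg]
  intro k hk
  have hk_abs := abs_le_of_dyadic_recursion σ h1_abs heven hodd k hk
  rw [abs_le] at hk_abs
  constructor <;> linarith [hk_abs.1, hk_abs.2]

theorem sigma_bounds (σ : ℕ → ℝ) (h0 : σ 0 = 1) (h1 : σ 1 = -1/3)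
    (heven : ∀ n : ℕ, σ (2 * n) = σ n)
    (hodd : ∀ n : ℕ, σ (2 * n + 1) = -(σ n + σ (n + 1)) / 2) :
    ∀ k : ℕ, k ≠ 0 → -1/3 ≤ σ k ∧ σ k ≤ 1/3 :=
  sigma_bounds_general σ h1 heven hodd
end

section
/- For any M ∈ ℕ with M ≥ 1 and infinite sequences x, y, LSD(x,y) = liminf_{n→∞} SD(x[0..Mn-1], y[0..Mn-1]) and USD(x,y) = limsup_{n→∞} SD(x[0..Mn-1], y[0..Mn-1]). -/
open scoped Classical

/-- Similarity density of length-`n` prefixes of two infinite sequences. -/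
noncomputable def SDp {α : Type*} (x y : ℕ → α) (n : ℕ) : ℝ :=
  (∑ i ∈ Finset.range n, if x i = y i then (1 : ℝ) else 0) / n

noncomputable def LSD {α : Type*} (x y : ℕ → α) : ℝ := Filter.liminf (SDp x y) Filter.atTop
noncomputable def USD {α : Type*} (x y : ℕ → α) : ℝ := Filter.limsup (SDp x y) Filter.atTop

/-!
If `m ≤ n`, the first `n` positions contain at least as many agreements as the first `m` and at
most `n - m` more, so `|SD n - SD m| ≤ (n - m) / n`. Rounding `n` down to the multiple
`M * (n / M)` therefore moves `SD n` by at most `M / n → 0`, and bounded real sequences whose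
difference tends to `0` have the same `liminf` and `limsup`. Finally `n ↦ n / M` maps `atTop`
onto `atTop`, so `SD (M * (n / M))` and `SD (M * k)` have the same `liminf` and `limsup`.
-/

open Filter Finset Topology

namespace Filter

theorem limsup_comp_div_nat {α : Type*} [ConditionallyCompleteLattice α] (g : ℕ → α)
    {k : ℕ} (hk : 0 < k) : limsup (fun n => g (n / k)) atTop = limsup g atTop := by
  rw [← Function.comp_def, limsup_comp, map_div_atTop_eq_nat k hk]

theorem liminf_comp_div_nat {α : Type*} [ConditionallyCompleteLattice α] (g : ℕ → α)
    {k : ℕ} (hk : 0 < k) : liminf (fun n => g (n / k)) atTop = liminf g atTop := by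
  rw [← Function.comp_def, liminf_comp, map_div_atTop_eq_nat k hk]

section

variable {ι α : Type*} [AddCommGroup α] [ConditionallyCompleteLinearOrder α] [DenselyOrdered α]
  [AddLeftMono α] [TopologicalSpace α] [OrderTopology α] {f : Filter ι} [f.NeBot] {u v : ι → α}

theorem limsup_eq_of_tendsto_sub_nhds_zero (hv₁ : IsBoundedUnder (· ≤ ·) f v)
    (hv₂ : IsBoundedUnder (· ≥ ·) f v) (h : Tendsto (u - v) f (𝓝 0)) :
    limsup u f = limsup v f := by
  have h₁ := le_limsup_add hv₁ hv₂.isCoboundedUnder_le h.isBoundedUnder_le h.isBoundedUnder_ge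
  have h₂ := limsup_add_le hv₂ hv₁ h.isCoboundedUnder_le h.isBoundedUnder_le
  rw [h.liminf_eq, add_zero, add_sub_cancel] at h₁
  rw [h.limsup_eq, add_zero, add_sub_cancel] at h₂
  exact le_antisymm h₂ h₁

theorem liminf_eq_of_tendsto_sub_nhds_zero (hv₁ : IsBoundedUnder (· ≤ ·) f v)
    (hv₂ : IsBoundedUnder (· ≥ ·) f v) (h : Tendsto (u - v) f (𝓝 0)) :
    liminf u f = liminf v f := by
  have h₁ := le_liminf_add hv₂ hv₁ h.isBoundedUnder_ge h.isCoboundedUnder_ge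
  have h₂ := liminf_add_le h.isBoundedUnder_ge h.isBoundedUnder_le hv₂ hv₁.isCoboundedUnder_ge
  rw [h.liminf_eq, add_zero, add_sub_cancel] at h₁
  rw [h.limsup_eq, zero_add, sub_add_cancel] at h₂
  exact le_antisymm h₂ h₁

end

end Filter

theorem abs_div_sub_div_le {s t m n : ℝ} (hs : 0 ≤ s) (hsm : s ≤ m) (hst : s ≤ t)
    (hts : t - s ≤ n - m) (hm : 0 < m) (hmn : m ≤ n) : |t / n - s / m| ≤ (n - m) / n := by
  have hn : 0 < n := hm.trans_le hmn
  have key : t / n - s / m = ((t - s) * m - (n - m) * s) / (n * m) := by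
    field_simp
    ring
  have hnum : |(t - s) * m - (n - m) * s| ≤ (n - m) * m := by
    rw [abs_le]
    constructor <;> nlinarith
  calc |t / n - s / m| = |(t - s) * m - (n - m) * s| / (n * m) := by
        rw [key, abs_div, abs_of_pos (mul_pos hn hm)]
    _ ≤ (n - m) * m / (n * m) := by gcongr
    _ = (n - m) / n := mul_div_mul_right _ _ hm.ne'

section agreement

variable {α : Type*} (x y : ℕ → α)

noncomputable def agreeCount (n : ℕ) : ℕ := #{i ∈ range n | x i = y i}

theorem agreeCount_le (n : ℕ) : agreeCount x y n ≤ n :=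
  (card_filter_le _ _).trans (card_range n).le

theorem agreeCount_succ_le (n : ℕ) : agreeCount x y (n + 1) ≤ agreeCount x y n + 1 := by
  unfold agreeCount
  rw [range_add_one, filter_insert]
  split_ifs
  · exact card_insert_le _ _
  · exact Nat.le_succ _

theorem agreeCount_mono : Monotone (agreeCount x y) :=
  fun _ _ h => card_le_card (filter_subset_filter _ (range_subset_range.2 h))

theorem agreeCount_le_add {m n : ℕ} (h : m ≤ n) :
    agreeCount x y n ≤ agreeCount x y m + (n - m) := by
  induction n, h using Nat.le_induction with
  | base => simp
  | succ n hmn ih => have := agreeCount_succ_le x y n; omega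

theorem SDp_eq_agreeCount_div (n : ℕ) : SDp x y n = agreeCount x y n / n := by
  simp [SDp, agreeCount, sum_boole]

theorem SDp_nonneg (n : ℕ) : 0 ≤ SDp x y n := by
  rw [SDp_eq_agreeCount_div]; positivity

theorem SDp_le_one (n : ℕ) : SDp x y n ≤ 1 := by
  rw [SDp_eq_agreeCount_div]
  exact div_le_one_of_le₀ (by exact_mod_cast agreeCount_le x y n) n.cast_nonneg

theorem abs_SDp_sub_SDp_le {m n : ℕ} (hm : 0 < m) (hmn : m ≤ n) :
    |SDp x y n - SDp x y m| ≤ ((n : ℝ) - m) / n := by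
  rw [SDp_eq_agreeCount_div, SDp_eq_agreeCount_div]
  have hgap : (agreeCount x y n : ℝ) ≤ agreeCount x y m + ((n : ℝ) - m) := by
    rw [← Nat.cast_sub hmn]
    exact_mod_cast agreeCount_le_add x y hmn
  exact abs_div_sub_div_le (by positivity) (by exact_mod_cast agreeCount_le x y m)
    (by exact_mod_cast agreeCount_mono x y hmn) (by linarith) (by exact_mod_cast hm)
    (by exact_mod_cast hmn)

theorem tendsto_SDp_sub_SDp_mul_div {M : ℕ} (hM : 0 < M) :
    Tendsto (fun n => SDp x y n - SDp x y (M * (n / M))) atTop (𝓝 0) := by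
  refine squeeze_zero_norm' ?_ (tendsto_const_div_atTop_nhds_zero_nat (M : ℝ))
  filter_upwards [eventually_ge_atTop M] with n hn
  have hlow : 0 < M * (n / M) := Nat.mul_pos hM (Nat.div_pos hn hM)
  have hgap : n < M * (n / M) + M := by rw [Nat.mul_comm]; exact Nat.lt_div_mul_add hM
  calc ‖SDp x y n - SDp x y (M * (n / M))‖ ≤ ((n : ℝ) - (M * (n / M) : ℕ)) / n :=
        abs_SDp_sub_SDp_le x y hlow (Nat.mul_div_le n M)
    _ ≤ M / n := by
        gcongr
        have : (n : ℝ) < (M * (n / M) : ℕ) + M := by exact_mod_cast hgap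
        linarith

end agreement

theorem LSD_USD_fixed_interval {α : Type*} (M : ℕ) (hM : 1 ≤ M) (x y : ℕ → α) :
    LSD x y = Filter.liminf (fun n : ℕ => SDp x y (M * n)) Filter.atTop ∧
      USD x y = Filter.limsup (fun n : ℕ => SDp x y (M * n)) Filter.atTop := by
  set v : ℕ → ℝ := fun n => SDp x y (M * (n / M))
  have hw : Tendsto (SDp x y - v) atTop (𝓝 0) := tendsto_SDp_sub_SDp_mul_div x y hM
  have hv₁ : IsBoundedUnder (· ≤ ·) atTop v := isBoundedUnder_of ⟨1, fun n => SDp_le_one x y _⟩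
  have hv₂ : IsBoundedUnder (· ≥ ·) atTop v := isBoundedUnder_of ⟨0, fun n => SDp_nonneg x y _⟩
  constructor
  · rw [LSD, liminf_eq_of_tendsto_sub_nhds_zero hv₁ hv₂ hw,
      liminf_comp_div_nat (fun k => SDp x y (M * k)) hM]
  · rw [USD, limsup_eq_of_tendsto_sub_nhds_zero hv₁ hv₂ hw,
      limsup_comp_div_nat (fun k => SDp x y (M * k)) hM]
end

section
/- Let h be the sequence whose n-th term is the parity of the number of 0s in the binary representation of n (with h[0] = 0). Then for every n ∈ ℕ, the block h[2^n .. 2^{n+1}-1] equals t_n if n is even and equals the complement of t_n if n is odd, where t_n = μ^n(0) is the length-2^n Thue–Morse prefix. -/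
/-- The Thue–Morse morphism on binary words over {0,1} ⊆ ℕ. -/
def mu (l : List ℕ) : List ℕ := l.flatMap (fun b => [b, 1 - b])

/-- The length-2^n Thue–Morse prefix t_n = μ^n(0). -/
def tWord (n : ℕ) : List ℕ := mu^[n] [0]

/-- Bitwise complement of a binary word. -/
def comp (l : List ℕ) : List ℕ := l.map (fun b => 1 - b)

/-- The sequence h: parity of the number of 0s in the binary representation (h 0 = 0). -/
def hseq (n : ℕ) : ℕ := (Nat.digits 2 n).count 0 % 2

/-! Appending the bit `0` to a nonzero `m` flips `hseq m` and appending `1` keeps it, so each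
block arises from the previous one by the substitution `b ↦ (1 - b) b`, that is
`hBlock (n + 1) = comp (mu (hBlock n))`. As `mu` commutes with `comp` and `comp` is involutive on
`t_n`, the block is `t_n` or its complement according to the parity of `n`. -/

theorem List.map_range_two_mul {α : Type*} (f : ℕ → α) (m : ℕ) :
    (List.range (2 * m)).map f = (List.range m).flatMap (fun q => [f (2 * q), f (2 * q + 1)]) := by
  induction m with
  | zero => simp
  | succ k ih =>
    rw [show 2 * (k + 1) = 2 * k + 1 + 1 by ring, List.range_succ, List.range_succ,
      List.range_succ, List.flatMap_append, ← ih]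
    simp

lemma hseq_lt_two (m : ℕ) : hseq m < 2 := Nat.mod_lt _ two_pos

lemma hseq_two_mul {m : ℕ} (hm : m ≠ 0) : hseq (2 * m) = 1 - hseq m := by
  unfold hseq
  rw [Nat.digits_def' one_lt_two (by omega), Nat.mul_mod_right,
    Nat.mul_div_cancel_left _ two_pos, List.count_cons_self]
  omega

lemma hseq_two_mul_add_one (m : ℕ) : hseq (2 * m + 1) = hseq m := by
  unfold hseq
  rw [Nat.digits_def' one_lt_two (by omega), Nat.mul_add_mod, Nat.mul_add_div two_pos]
  simp

lemma mu_comp (l : List ℕ) : mu (comp l) = comp (mu l) := by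
  simp only [mu, comp, List.flatMap_map, List.map_flatMap, List.map_cons, List.map_nil]

lemma tWord_succ (n : ℕ) : tWord (n + 1) = mu (tWord n) :=
  Function.iterate_succ_apply' mu n [0]

lemma comp_comp_tWord (n : ℕ) : comp (comp (tWord n)) = tWord n := by
  induction n with
  | zero => rfl
  | succ k ih => rw [tWord_succ, ← mu_comp, ← mu_comp, ih]

def hBlock (n : ℕ) : List ℕ := (List.range (2 ^ n)).map (fun j => hseq (2 ^ n + j))

lemma hBlock_succ (n : ℕ) : hBlock (n + 1) = comp (mu (hBlock n)) := by
  have hbit (q : ℕ) : [hseq (2 * 2 ^ n + 2 * q), hseq (2 * 2 ^ n + (2 * q + 1))] =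
      [1 - hseq (2 ^ n + q), 1 - (1 - hseq (2 ^ n + q))] := by
    have := hseq_lt_two (2 ^ n + q)
    rw [show 2 * 2 ^ n + 2 * q = 2 * (2 ^ n + q) by ring,
      show 2 * 2 ^ n + (2 * q + 1) = 2 * (2 ^ n + q) + 1 by ring,
      hseq_two_mul (by positivity), hseq_two_mul_add_one]
    congr 2
    omega
  simp only [hBlock, mu, comp, pow_succ', List.map_range_two_mul, List.flatMap_map, List.map_flatMap,
    List.map_cons, List.map_nil, hbit]

theorem h_blocks (n : ℕ) :
    (List.range (2 ^ n)).map (fun j => hseq (2 ^ n + j)) =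
      if Even n then tWord n else comp (tWord n) := by
  change hBlock n = _
  induction n with
  | zero => rfl
  | succ k ih =>
    rw [hBlock_succ, ih]
    by_cases hk : Even k
    · rw [if_pos hk, if_neg (Nat.even_add_one.mp · hk), tWord_succ]
    · rw [if_neg hk, if_pos (Nat.even_add_one.mpr hk), mu_comp, ← tWord_succ, comp_comp_tWord]
end
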